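/- Let G be a group and let π : F → G and π̄ : F̄ → G be surjective group homomorphisms from free groups F and F̄ (free on arbitrary types), with kernels R = ker π and R̄ = ker π̄. Then there is a group isomorphism (R ∩ F')/⟨K(F) ∩ R⟩ ≅ (R̄ ∩ F̄')/⟨K(F̄) ∩ R̄⟩; that is, the B̃₀-invariant of G with respect to the abelian variety is independent of the chosen free presentation of G. -/

import Mathlib

open Subgroup

/-- `Kcl S = ⟨K(F) ∩ S⟩`: the subgroup of `F` generated by the commutators of `F`
that lie in `S`. -/
def Kcl {F : Type*} [Group F] (S : Subgroup F) : Subgroup F :=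
  Subgroup.closure (commutatorSet F ∩ (S : Set F))

instance Kcl_normal {F : Type*} [Group F] (S : Subgroup F) [hS : S.Normal] :
    (Kcl S).Normal := by
  constructor
  intro n hn g
  induction hn using Subgroup.closure_induction with
  | mem x hx =>
      obtain ⟨⟨a, b, hab⟩, hxS⟩ := hx
      apply Subgroup.subset_closure
      refine ⟨⟨g * a * g⁻¹, g * b * g⁻¹, ?_⟩, hS.conj_mem x hxS g⟩
      rw [← conjugate_commutatorElement, hab]
  | one => simpa using (Kcl S).one_mem
  | mul x y _ _ hx hy =>
      have h : g * (x * y) * g⁻¹ = (g * x * g⁻¹) * (g * y * g⁻¹) := by group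
      rw [h]; exact mul_mem hx hy
  | inv x _ hx =>
      have h : g * x⁻¹ * g⁻¹ = (g * x * g⁻¹)⁻¹ := by group
      rw [h]; exact inv_mem hx

theorem Kcl_le {F : Type*} [Group F] (S : Subgroup F) : Kcl S ≤ S :=
  (Subgroup.closure_le S).2 Set.inter_subset_right

theorem Kcl_le_commutator {F : Type*} [Group F] (S : Subgroup F) :
    Kcl S ≤ commutator F := by
  rw [commutator_eq_closure]
  exact Subgroup.closure_mono Set.inter_subset_left

theorem Kcl_mono {F : Type*} [Group F] {R K : Subgroup F} (h : R ≤ K) : Kcl R ≤ Kcl K :=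
  Subgroup.closure_mono (Set.inter_subset_inter_right _ h)

theorem subgroupOf_le_comap_inclusion {F : Type*} [Group F] {A B H₁ H₂ : Subgroup F}
    (hH : H₁ ≤ H₂) (hAB : A ≤ B) :
    A.subgroupOf H₁ ≤ (B.subgroupOf H₂).comap (Subgroup.inclusion hH) := by
  intro x hx
  rw [Subgroup.mem_comap, Subgroup.mem_subgroupOf, Subgroup.coe_inclusion]
  exact hAB (Subgroup.mem_subgroupOf.mp hx)

section Aux

variable {H F G : Type*} [Group H] [Group F] [Group G]

theorem Kcl_le_comap (φ : H →* F) {S : Subgroup H} {T : Subgroup F}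
    (h : S ≤ T.comap φ) : Kcl S ≤ (Kcl T).comap φ := by
  apply (Subgroup.closure_le _).2
  rintro x ⟨⟨a, b, rfl⟩, hxS⟩
  exact Subgroup.mem_comap.2 (Subgroup.subset_closure
    ⟨⟨φ a, φ b, (map_commutatorElement φ a b).symm⟩, h hxS⟩)

theorem commutator_le_comap (φ : H →* F) : commutator H ≤ (commutator F).comap φ := by
  rw [commutator_eq_closure]
  apply (Subgroup.closure_le _).2
  rintro x ⟨a, b, rfl⟩
  simp only [SetLike.mem_coe, Subgroup.mem_comap, map_commutatorElement]
  exact Subgroup.commutator_mem_commutator (Subgroup.mem_top _) (Subgroup.mem_top _)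

theorem delta_mem (φ : H →* F) (ι : F →* H) (hφι : ∀ y, φ (ι y) = y)
    (π : F →* G) {x : H} (hx : x ∈ commutator H) :
    (ι (φ x))⁻¹ * x ∈ Kcl (π.comp φ).ker := by
  set p : H →* G := π.comp φ with hp
  set M : Subgroup H := Kcl p.ker with hM
  set q : H →* H ⧸ M := QuotientGroup.mk' M with hq
  have hcentral : ∀ n : H, φ n = 1 → q n ∈ Subgroup.center (H ⧸ M) := by
    intro n hn
    rw [Subgroup.mem_center_iff]
    intro z
    induction z using QuotientGroup.induction_on with
    | H w =>
      show q w * q n = q n * q w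
      rw [← map_mul, ← map_mul]
      have hmem : (w * n)⁻¹ * (n * w) ∈ M := by
        apply Subgroup.subset_closure
        constructor
        · exact ⟨n⁻¹, w⁻¹, by group⟩
        · have : p n = 1 := by
            simp [hp, MonoidHom.comp_apply, hn]
          simp only [SetLike.mem_coe, MonoidHom.mem_ker, map_mul, map_inv, this]
          have : p w * 1 = p w := mul_one _
          group
      have := (QuotientGroup.eq (s := M)).2 hmem
      exact this
  set ψ : H →* H ⧸ M := q.comp (ι.comp φ) with hψ
  have hc : ∀ w : H, (ψ w)⁻¹ * q w ∈ Subgroup.center (H ⧸ M) := by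
    intro w
    have h1 : (ψ w)⁻¹ * q w = q ((ι (φ w))⁻¹ * w) := by
      simp [hψ, map_mul, map_inv]
    rw [h1]
    exact hcentral _ (by simp [map_mul, map_inv, hφι])
  let δ : H →* Subgroup.center (H ⧸ M) :=
    { toFun := fun w => ⟨(ψ w)⁻¹ * q w, hc w⟩
      map_one' := by ext; simp
      map_mul' := by
        intro v w
        ext
        show (ψ (v * w))⁻¹ * q (v * w) = ((ψ v)⁻¹ * q v) * ((ψ w)⁻¹ * q w)
        have hv := (Subgroup.mem_center_iff.1 (hc v)) ((ψ w)⁻¹)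
        rw [map_mul, map_mul, mul_inv_rev, mul_assoc ((ψ w)⁻¹), ← mul_assoc ((ψ v)⁻¹),
          ← mul_assoc ((ψ w)⁻¹), hv, mul_assoc] }
  have hker : δ x = 1 := by
    letI : CommGroup (Subgroup.center (H ⧸ M)) :=
      { (Subgroup.center (H ⧸ M)).toGroup with
        mul_comm := fun a b => Subtype.ext (Subgroup.mem_center_iff.1 b.2 a) }
    exact MonoidHom.mem_ker.1 (Abelianization.commutator_subset_ker δ hx)
  have h1 : (ψ x)⁻¹ * q x = 1 := congrArg Subtype.val hker
  have h2 : q ((ι (φ x))⁻¹ * x) = 1 := by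
    rw [map_mul, map_inv]
    exact h1
  have := (QuotientGroup.eq_one_iff _).1 h2
  exact this

theorem key_iso (φ : H →* F) (ι : F →* H) (hφι : ∀ y, φ (ι y) = y) (π : F →* G) :
    Nonempty
      ((↥((π.comp φ).ker ⊓ commutator H) ⧸
          (Kcl (π.comp φ).ker).subgroupOf ((π.comp φ).ker ⊓ commutator H)) ≃*
        (↥(π.ker ⊓ commutator F) ⧸
          (Kcl π.ker).subgroupOf (π.ker ⊓ commutator F))) := by
  set p : H →* G := π.comp φ with hp
  have hkerle : p.ker ≤ π.ker.comap φ := le_of_eq (MonoidHom.comap_ker π φ).symm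
  have hkerle' : π.ker ≤ p.ker.comap ι := by
    intro r hr
    simp only [Subgroup.mem_comap, MonoidHom.mem_ker, hp, MonoidHom.comp_apply, hφι]
    exact hr
  set A : Subgroup H := p.ker ⊓ commutator H with hA
  set B : Subgroup F := π.ker ⊓ commutator F with hB
  have hfwd0 : ∀ x : A, (φ.domRestrict A) x ∈ B := by
    rintro ⟨x, hx⟩
    obtain ⟨h1, h2⟩ := Subgroup.mem_inf.1 hx
    exact Subgroup.mem_inf.2 ⟨hkerle h1, commutator_le_comap φ h2⟩
  have hbwd0 : ∀ y : B, (ι.domRestrict B) y ∈ A := by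
    rintro ⟨y, hy⟩
    obtain ⟨h1, h2⟩ := Subgroup.mem_inf.1 hy
    exact Subgroup.mem_inf.2 ⟨hkerle' h1, commutator_le_comap ι h2⟩
  set fwd0 : A →* B := (φ.domRestrict A).codRestrict B hfwd0 with hfwd0'
  set bwd0 : B →* A := (ι.domRestrict B).codRestrict A hbwd0 with hbwd0'
  set MA : Subgroup A := (Kcl p.ker).subgroupOf A with hMA
  set MB : Subgroup B := (Kcl π.ker).subgroupOf B with hMB
  have hfwdker : ∀ x ∈ MA, ((QuotientGroup.mk' MB).comp fwd0) x = 1 := by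
    intro x hx
    rw [MonoidHom.comp_apply, QuotientGroup.mk'_apply, QuotientGroup.eq_one_iff]
    rw [hMB, Subgroup.mem_subgroupOf]
    exact Kcl_le_comap φ hkerle (Subgroup.mem_subgroupOf.1 hx)
  have hbwdker : ∀ y ∈ MB, ((QuotientGroup.mk' MA).comp bwd0) y = 1 := by
    intro y hy
    rw [MonoidHom.comp_apply, QuotientGroup.mk'_apply, QuotientGroup.eq_one_iff]
    rw [hMA, Subgroup.mem_subgroupOf]
    exact Kcl_le_comap ι hkerle' (Subgroup.mem_subgroupOf.1 hy)
  set fwdQ := QuotientGroup.lift MA ((QuotientGroup.mk' MB).comp fwd0)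
    (fun x hx => MonoidHom.mem_ker.2 (hfwdker x hx)) with hfwdQ
  set bwdQ := QuotientGroup.lift MB ((QuotientGroup.mk' MA).comp bwd0)
    (fun y hy => MonoidHom.mem_ker.2 (hbwdker y hy)) with hbwdQ
  refine ⟨MonoidHom.toMulEquiv fwdQ bwdQ ?_ ?_⟩
  · refine MonoidHom.ext fun z => ?_
    induction z using QuotientGroup.induction_on with
    | H x =>
      show bwdQ (fwdQ ((QuotientGroup.mk' MA) x)) = (QuotientGroup.mk' MA) x
      rw [hfwdQ, hbwdQ]
      simp only [QuotientGroup.mk'_apply, QuotientGroup.lift_mk, MonoidHom.comp_apply]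
      rw [QuotientGroup.eq]
      rw [hMA, Subgroup.mem_subgroupOf]
      have hxcomm : (x : H) ∈ commutator H := (Subgroup.mem_inf.1 x.2).2
      have := delta_mem φ ι hφι π hxcomm
      convert this using 2
      rfl
  · refine MonoidHom.ext fun z => ?_
    induction z using QuotientGroup.induction_on with
    | H y =>
      show fwdQ (bwdQ ((QuotientGroup.mk' MB) y)) = (QuotientGroup.mk' MB) y
      rw [hfwdQ, hbwdQ]
      simp only [QuotientGroup.mk'_apply, QuotientGroup.lift_mk, MonoidHom.comp_apply]
      congr 1
      ext
      exact hφι _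

end Aux

/-- the `B̃₀`-invariant `(R ∩ F')/⟨K(F) ∩ R⟩` (abelian variety) is independent of
the chosen free presentation `π : F ↠ G`, `R = ker π`, of `G`. -/
theorem stmt5 {G : Type*} [Group G] {α β : Type*}
    (π : FreeGroup α →* G) (hπ : Function.Surjective π)
    (πb : FreeGroup β →* G) (hπb : Function.Surjective πb) :
    Nonempty
      ((↥(π.ker ⊓ commutator (FreeGroup α)) ⧸
          (Kcl π.ker).subgroupOf (π.ker ⊓ commutator (FreeGroup α))) ≃*
        (↥(πb.ker ⊓ commutator (FreeGroup β)) ⧸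
          (Kcl πb.ker).subgroupOf (πb.ker ⊓ commutator (FreeGroup β)))) := by
  classical
  choose f hf using fun b : β => hπ (πb (FreeGroup.of b))
  choose g hg using fun a : α => hπb (π (FreeGroup.of a))
  set φ : FreeGroup (α ⊕ β) →* FreeGroup α := FreeGroup.lift (Sum.elim FreeGroup.of f) with hφ
  set ι : FreeGroup α →* FreeGroup (α ⊕ β) :=
    FreeGroup.lift (fun a => FreeGroup.of (Sum.inl a)) with hι
  set φ' : FreeGroup (α ⊕ β) →* FreeGroup β := FreeGroup.lift (Sum.elim g FreeGroup.of) with hφ'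
  set ι' : FreeGroup β →* FreeGroup (α ⊕ β) :=
    FreeGroup.lift (fun b => FreeGroup.of (Sum.inr b)) with hι'
  have hφι : ∀ y, φ (ι y) = y := by
    intro y
    have h : φ.comp ι = MonoidHom.id _ := by
      apply FreeGroup.ext_hom
      intro a
      simp [hφ, hι]
    calc φ (ι y) = (φ.comp ι) y := rfl
    _ = y := by rw [h]; rfl
  have hφι' : ∀ y, φ' (ι' y) = y := by
    intro y
    have h : φ'.comp ι' = MonoidHom.id _ := by
      apply FreeGroup.ext_hom
      intro b
      simp [hφ', hι']
    calc φ' (ι' y) = (φ'.comp ι') y := rfl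
    _ = y := by rw [h]; rfl
  have hcomp : π.comp φ = πb.comp φ' := by
    apply FreeGroup.ext_hom
    rintro (a | b)
    · simp [hφ, hφ', hg]
    · simp [hφ, hφ', hf]
  obtain ⟨e1⟩ := key_iso φ ι hφι π
  obtain ⟨e2⟩ := key_iso φ' ι' hφι' πb
  rw [hcomp] at e1
  exact ⟨e1.symm.trans e2⟩
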